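/- arXiv:2401.12299 — 4 statements merged into one kernel-verified Lean document; each statement's English description precedes it below -/
import Mathlib

section
/- (Projection estimate, Lemma 4.2.) Fix r ≥ 0 and b ∈ (0,1]. There exist ζ₀ ∈ (0,1) and C > 0, depending only on r and b, such that for all ζ ∈ (0, ζ₀) the following holds. Let g be a complete geodesic in ℍ and let u ∈ ℍ satisfy d(u,g) ≤ r. Suppose h is a complete geodesic that is ζ-Hausdorff-close to g on the closed ball of radius b·log(1/ζ) centered at u. Then for every closest-point projection p of u to g and every closest-point projection q of u to h, one has dist(p,q) ≤ C·ζ^{1+b}. -/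
open Metric

/-- A complete geodesic in the hyperbolic plane `ℍ`: the range of an isometric
embedding `ℝ → ℍ`. -/
def IsCompleteGeodesic (g : Set UpperHalfPlane) : Prop :=
  ∃ γ : ℝ → UpperHalfPlane, Isometry γ ∧ g = Set.range γ

/-- The sets `a` and `b` lie in one and the same connected component of the
complement of `g`. -/
def SameSideOf (g a b : Set UpperHalfPlane) : Prop :=
  ∃ x ∈ gᶜ, a ⊆ connectedComponentIn gᶜ x ∧ b ⊆ connectedComponentIn gᶜ x

/-- A pairwise disjoint non-separating triple of complete geodesics in `ℍ`:
the three sets are complete geodesics, pairwise disjoint, and for each `i`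
the other two geodesics lie in one and the same connected component of the
complement of `gᵢ`. -/
def NonSepTriple (g₁ g₂ g₃ : Set UpperHalfPlane) : Prop :=
  IsCompleteGeodesic g₁ ∧ IsCompleteGeodesic g₂ ∧ IsCompleteGeodesic g₃ ∧
  Disjoint g₁ g₂ ∧ Disjoint g₁ g₃ ∧ Disjoint g₂ g₃ ∧
  SameSideOf g₁ g₂ g₃ ∧ SameSideOf g₂ g₁ g₃ ∧ SameSideOf g₃ g₁ g₂

/-- `u` is a center of the triple `(g₁, g₂, g₃)`: it is equidistant from the
three geodesics. -/
def IsCenter (u : UpperHalfPlane) (g₁ g₂ g₃ : Set UpperHalfPlane) : Prop :=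
  infDist u g₁ = infDist u g₂ ∧ infDist u g₂ = infDist u g₃

/-- The geodesics `g` and `h` are `ζ`-Hausdorff-close on the set `B`. -/
def HClose (g h B : Set UpperHalfPlane) (ζ : ℝ) : Prop :=
  (g ∩ B).Nonempty ∧ (h ∩ B).Nonempty ∧ hausdorffDist (g ∩ B) (h ∩ B) ≤ ζ

/-!
In the hyperboloid model `ℍ ⊆ ℝ^{1,2}` with Lorentz form `⟪·, ·⟫`, a geodesic through `p` with
unit tangent `B` is `t ↦ cosh t • p + sinh t • B`; `p` is the closest point of the geodesic to `u`
exactly when `⟪u, B⟫ = 0`; and if `W` is the unit normal of the plane of a geodesic `h`, then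
`|⟪x, W⟫| ≤ sinh (d(x, h))`. The two points of `g` at distance `T = b log (1/ζ) - r` from `p` lie
in the ball, hence within `ζ` of `h`, and evaluating `⟪·, W⟫` at them shows that `W` is orthogonal
to `p` and to the tangent of `g` up to `sinh ζ / sinh T = O(ζ ^ (1 + b))`: the exponential
divergence of geodesics is what produces the factor `ζ ^ b`. In an orthonormal frame adapted to
`g`, elementary algebra then gives `sinh (d(p, q)) ^ 2 = ⟪p, q⟫ ^ 2 - 1 = O((sinh ζ / sinh T) ^ 2)`.
-/

open Metric Real

namespace Real

lemma eq_zero_of_forall_le_cosh_mul_add_sinh_mul {α β : ℝ}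
    (h : ∀ t, α ≤ cosh t * α + sinh t * β) : β = 0 := by
  have hmin : IsLocalMin (fun t => cosh t * α + sinh t * β) 0 :=
    Filter.Eventually.of_forall fun t => by simpa using h t
  have hderiv : HasDerivAt (fun t => cosh t * α + sinh t * β) (sinh 0 * α + cosh 0 * β) 0 :=
    ((hasDerivAt_cosh 0).mul_const α).add ((hasDerivAt_sinh 0).mul_const β)
  simpa using hmin.hasDerivAt_eq_zero hderiv

lemma sinh_le_two_mul {x : ℝ} (hx₀ : 0 ≤ x) (hx₁ : x ≤ 1) : sinh x ≤ 2 * x := by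
  have hpos := abs_exp_sub_one_le (x := x) (by rwa [abs_of_nonneg hx₀])
  have hneg := abs_exp_sub_one_le (x := -x) (by rwa [abs_neg, abs_of_nonneg hx₀])
  rw [abs_neg, abs_of_nonneg hx₀, abs_le] at hneg
  rw [abs_of_nonneg hx₀, abs_le] at hpos
  rw [sinh_eq]
  linarith

lemma exp_div_four_le_sinh {x : ℝ} (hx : 1 ≤ x) : exp x / 4 ≤ sinh x := by
  have hneg : exp (-x) ≤ 1 := exp_le_one_iff.mpr (by linarith)
  have hpos : 2 ≤ exp x := by linarith [add_one_le_exp x]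
  rw [sinh_eq]
  linarith

lemma sinh_div_sinh_le {ζ T : ℝ} (hζ₀ : 0 ≤ ζ) (hζ₁ : ζ ≤ 1) (hT : 1 ≤ T) :
    sinh ζ / sinh T ≤ 8 * ζ * exp (-T) := by
  have hT' : 0 < exp T / 4 := by positivity
  rw [div_le_iff₀ (hT'.trans_le (exp_div_four_le_sinh hT))]
  calc sinh ζ ≤ 2 * ζ := sinh_le_two_mul hζ₀ hζ₁
    _ = 8 * ζ * exp (-T) * (exp T / 4) := by rw [exp_neg]; field_simp; ring
    _ ≤ 8 * ζ * exp (-T) * sinh T := by gcongr; exact exp_div_four_le_sinh hT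

lemma abs_le_div_sinh_of_abs_cosh_mul_add_sinh_mul_le {T μ ν s : ℝ} (hT : 0 < T)
    (hadd : |cosh T * μ + sinh T * ν| ≤ s) (hsub : |cosh T * μ - sinh T * ν| ≤ s) :
    |μ| ≤ s / sinh T ∧ |ν| ≤ s / sinh T := by
  have hsinh : 0 < sinh T := sinh_pos_iff.mpr hT
  rw [abs_le] at hadd hsub
  have hμ : |cosh T * μ| ≤ s := abs_le.mpr ⟨by linarith, by linarith⟩
  have hν : |sinh T * ν| ≤ s := abs_le.mpr ⟨by linarith, by linarith⟩
  rw [abs_mul, abs_of_pos (cosh_pos T)] at hμ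
  rw [abs_mul, abs_of_pos hsinh] at hν
  rw [le_div_iff₀' hsinh, le_div_iff₀' hsinh]
  exact ⟨(mul_le_mul_of_nonneg_right (sinh_lt_cosh T).le (abs_nonneg μ)).trans hμ, hν⟩

end Real

lemma mul_sq_le_of_mul_eq_sub {x y z μ ν τ c : ℝ} (h : z * τ = x * μ - y * ν) (hc : c ≤ τ ^ 2) :
    c * z ^ 2 ≤ 2 * (x ^ 2 * μ ^ 2 + y ^ 2 * ν ^ 2) :=
  calc c * z ^ 2 ≤ τ ^ 2 * z ^ 2 := mul_le_mul_of_nonneg_right hc (sq_nonneg z)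
    _ = (x * μ + -(y * ν)) ^ 2 := by rw [← sub_eq_add_neg, ← h]; ring
    _ ≤ 2 * ((x * μ) ^ 2 + (-(y * ν)) ^ 2) := add_sq_le
    _ = 2 * (x ^ 2 * μ ^ 2 + y ^ 2 * ν ^ 2) := by ring

lemma infDist_le_of_hausdorffDist_inter_le {α : Type*} [MetricSpace α] {s t B : Set α}
    (hB : Bornology.IsBounded B) (ht : (t ∩ B).Nonempty) {ζ : ℝ}
    (hst : hausdorffDist (s ∩ B) (t ∩ B) ≤ ζ) {x : α} (hx : x ∈ s ∩ B) : infDist x t ≤ ζ :=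
  calc infDist x t ≤ infDist x (t ∩ B) := infDist_le_infDist_of_subset Set.inter_subset_left ht
    _ ≤ hausdorffDist (s ∩ B) (t ∩ B) :=
      infDist_le_hausdorffDist_of_mem hx <| hausdorffEDist_ne_top_of_nonempty_of_bounded ⟨x, hx⟩ ht
        (hB.subset Set.inter_subset_right) (hB.subset Set.inter_subset_right)
    _ ≤ ζ := hst

lemma IsCompleteGeodesic.exists_isometry_map_zero {g : Set UpperHalfPlane}
    (hg : IsCompleteGeodesic g) {p : UpperHalfPlane} (hp : p ∈ g) :
    ∃ γ : ℝ → UpperHalfPlane, Isometry γ ∧ g = Set.range γ ∧ γ 0 = p := by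
  obtain ⟨γ, hγ, rfl⟩ := hg
  obtain ⟨t₀, rfl⟩ := hp
  refine ⟨γ ∘ IsometryEquiv.addRight t₀, hγ.comp (IsometryEquiv.addRight t₀).isometry, ?_, ?_⟩
  · exact ((IsometryEquiv.addRight t₀).surjective.range_comp γ).symm
  · simp

namespace HyperboloidModel

abbrev V := ℝ × ℝ × ℝ

noncomputable def lorentz : LinearMap.BilinForm ℝ V :=
  LinearMap.mk₂ ℝ (fun P Q => P.1 * Q.1 - P.2.1 * Q.2.1 - P.2.2 * Q.2.2)
    (fun _ _ _ => by simp only [Prod.fst_add, Prod.snd_add]; ring)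
    (fun _ _ _ => by simp only [Prod.smul_fst, Prod.smul_snd, smul_eq_mul]; ring)
    (fun _ _ _ => by simp only [Prod.fst_add, Prod.snd_add]; ring)
    (fun _ _ _ => by simp only [Prod.smul_fst, Prod.smul_snd, smul_eq_mul]; ring)

lemma lorentz_apply (P Q : V) :
    lorentz P Q = P.1 * Q.1 - P.2.1 * Q.2.1 - P.2.2 * Q.2.2 := rfl

lemma lorentz_comm (P Q : V) : lorentz P Q = lorentz Q P := by
  simp only [lorentz_apply]; ring

def lorentzCross (P Q : V) : V :=
  (P.2.1 * Q.2.2 - P.2.2 * Q.2.1, P.1 * Q.2.2 - P.2.2 * Q.1, P.2.1 * Q.1 - P.1 * Q.2.1)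

lemma lorentz_lorentzCross_left (P Q : V) : lorentz P (lorentzCross P Q) = 0 := by
  simp only [lorentz_apply, lorentzCross]; ring

lemma lorentz_lorentzCross_right (P Q : V) : lorentz Q (lorentzCross P Q) = 0 := by
  simp only [lorentz_apply, lorentzCross]; ring

lemma lorentz_lorentzCross_self (P Q : V) :
    lorentz (lorentzCross P Q) (lorentzCross P Q) =
      lorentz P P * lorentz Q Q - lorentz P Q ^ 2 := by
  simp only [lorentz_apply, lorentzCross]; ring

lemma lorentz_lorentzCross_mul_lorentz_lorentzCross (Z Z' P Q : V) :
    lorentz Z (lorentzCross P Q) * lorentz Z' (lorentzCross P Q) =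
      lorentz Z Z' * (lorentz P P * lorentz Q Q - lorentz P Q ^ 2)
      - lorentz Z P * (lorentz Z' P * lorentz Q Q - lorentz P Q * lorentz Z' Q)
      + lorentz Z Q * (lorentz Z' P * lorentz P Q - lorentz P P * lorentz Z' Q) := by
  simp only [lorentz_apply, lorentzCross]; ring

structure IsOrthonormalPair (P Q : V) : Prop where
  timelike : lorentz P P = 1
  spacelike : lorentz Q Q = -1
  orthogonal : lorentz P Q = 0

namespace IsOrthonormalPair

variable {P Q : V}

lemma lorentz_lorentzCross_self (h : IsOrthonormalPair P Q) :
    lorentz (lorentzCross P Q) (lorentzCross P Q) = -1 := by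
  rw [HyperboloidModel.lorentz_lorentzCross_self, h.timelike, h.spacelike, h.orthogonal]; ring

lemma lorentz_eq (h : IsOrthonormalPair P Q) (Z Z' : V) :
    lorentz Z Z' = lorentz Z P * lorentz Z' P - lorentz Z Q * lorentz Z' Q
      - lorentz Z (lorentzCross P Q) * lorentz Z' (lorentzCross P Q) := by
  rw [lorentz_lorentzCross_mul_lorentz_lorentzCross, h.timelike, h.spacelike, h.orthogonal]; ring

end IsOrthonormalPair

lemma eq_zero_of_lorentz_self_eq_zero {A Y : V} (hA : lorentz A A = 1) (hYA : lorentz Y A = 0)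
    (hY : lorentz Y Y = 0) : Y = 0 := by
  obtain ⟨a₀, a₁, a₂⟩ := A
  obtain ⟨y₀, y₁, y₂⟩ := Y
  simp only [lorentz_apply] at hA hYA hY
  -- reverse Cauchy–Schwarz, made exact by Lagrange's identity
  have hsum : y₀ ^ 2 + (y₁ * a₂ - y₂ * a₁) ^ 2 = 0 := by
    linear_combination (-y₀ ^ 2) * hA - (a₁ * a₁ + a₂ * a₂) * hY
      + (y₀ * a₀ + y₁ * a₁ + y₂ * a₂) * hYA
  have hy₀ : y₀ = 0 := by nlinarith [sq_nonneg y₀, sq_nonneg (y₁ * a₂ - y₂ * a₁)]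
  have hy₁ : y₁ = 0 := by nlinarith [sq_nonneg y₁, sq_nonneg y₂]
  have hy₂ : y₂ = 0 := by nlinarith [sq_nonneg y₁, sq_nonneg y₂]
  simp [hy₀, hy₁, hy₂]

noncomputable def toHyperboloid (z : UpperHalfPlane) : V :=
  ((z.re ^ 2 + z.im ^ 2 + 1) / (2 * z.im), z.re / z.im, (z.re ^ 2 + z.im ^ 2 - 1) / (2 * z.im))

lemma lorentz_toHyperboloid (z w : UpperHalfPlane) :
    lorentz (toHyperboloid z) (toHyperboloid w) = cosh (dist z w) := by
  rw [UpperHalfPlane.cosh_dist', lorentz_apply, toHyperboloid, toHyperboloid]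
  have := z.im_pos.ne'
  have := w.im_pos.ne'
  field_simp
  ring

lemma lorentz_toHyperboloid_self (z : UpperHalfPlane) :
    lorentz (toHyperboloid z) (toHyperboloid z) = 1 := by
  simp [lorentz_toHyperboloid]

lemma _root_.Isometry.lorentz_toHyperboloid {γ : ℝ → UpperHalfPlane} (hγ : Isometry γ) (s t : ℝ) :
    lorentz (toHyperboloid (γ s)) (toHyperboloid (γ t)) = cosh (s - t) := by
  rw [HyperboloidModel.lorentz_toHyperboloid, hγ.dist_eq, Real.dist_eq, cosh_abs]

theorem _root_.Isometry.exists_isOrthonormalPair {γ : ℝ → UpperHalfPlane} (hγ : Isometry γ) :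
    ∃ B, IsOrthonormalPair (toHyperboloid (γ 0)) B ∧
      ∀ t, toHyperboloid (γ t) = cosh t • toHyperboloid (γ 0) + sinh t • B := by
  set X := fun t => toHyperboloid (γ t)
  have hXX : ∀ s t, lorentz (X s) (X t) = cosh (s - t) := hγ.lorentz_toHyperboloid
  have hsinh : sinh 1 ≠ 0 := (sinh_pos_iff.mpr one_pos).ne'
  -- `X 1 - X (-1) = 2 sinh 1 • B` for the unit tangent `B` at `γ 0`
  set B := (2 * sinh 1)⁻¹ • (X 1 - X (-1))
  have hXB : ∀ t, lorentz (X t) B = -sinh t := fun t => by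
    simp only [B, map_smul, map_sub, smul_eq_mul, hXX, cosh_sub, sub_neg_eq_add, cosh_add]
    field_simp
    ring
  have hBB : lorentz B B = -1 := by
    change lorentz ((2 * sinh 1)⁻¹ • (X 1 - X (-1))) B = -1
    rw [LinearMap.map_smul₂, LinearMap.map_sub₂, hXB, hXB, sinh_neg,
      smul_eq_mul]
    field_simp
    ring
  have hpair : IsOrthonormalPair (X 0) B :=
    ⟨lorentz_toHyperboloid_self _, hBB, by simpa using hXB 0⟩
  refine ⟨B, hpair, fun t => ?_⟩
  set Y := X t - (cosh t • X 0 + sinh t • B)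
  have hY : lorentz Y (X 0) = 0 := by
    simp only [Y, map_add, map_sub, map_smul, LinearMap.add_apply, LinearMap.sub_apply,
      LinearMap.smul_apply, smul_eq_mul, hXX, lorentz_comm B, hpair.orthogonal]
    simp
  have hYY : lorentz Y Y = 0 := by
    simp only [Y, map_add, map_sub, map_smul, LinearMap.add_apply, LinearMap.sub_apply,
      LinearMap.smul_apply, smul_eq_mul, hXX, hXB, lorentz_comm B, hBB, sub_self, sub_zero,
      cosh_zero, sinh_zero, zero_sub, cosh_neg]
    linear_combination (-1 : ℝ) * cosh_sq t
  exact sub_eq_zero.mp (eq_zero_of_lorentz_self_eq_zero hpair.timelike hY hYY)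

lemma lorentz_eq_zero_of_forall_dist_le {γ : ℝ → UpperHalfPlane} {u : UpperHalfPlane} {B : V}
    (hγ : ∀ t, toHyperboloid (γ t) = cosh t • toHyperboloid (γ 0) + sinh t • B)
    (hmin : ∀ t, dist u (γ 0) ≤ dist u (γ t)) :
    lorentz (toHyperboloid u) B = 0 := by
  refine eq_zero_of_forall_le_cosh_mul_add_sinh_mul
    (α := lorentz (toHyperboloid u) (toHyperboloid (γ 0))) fun t => ?_
  have h : cosh (dist u (γ 0)) ≤ cosh (dist u (γ t)) :=
    cosh_le_cosh.mpr (by simpa only [abs_dist] using hmin t)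
  rwa [← lorentz_toHyperboloid, ← lorentz_toHyperboloid, hγ t, map_add, map_smul, map_smul,
    smul_eq_mul, smul_eq_mul] at h

lemma abs_lorentz_lorentzCross_le_sinh_dist {A B : V} (hAB : IsOrthonormalPair A B)
    {y : UpperHalfPlane} {s : ℝ} (hy : toHyperboloid y = cosh s • A + sinh s • B)
    (x : UpperHalfPlane) :
    |lorentz (toHyperboloid x) (lorentzCross A B)| ≤ sinh (dist x y) := by
  set X := toHyperboloid x
  have hX := hAB.lorentz_eq X X
  rw [lorentz_toHyperboloid_self] at hX
  have hcosh : cosh (dist x y) = cosh s * lorentz X A + sinh s * lorentz X B := by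
    rw [← lorentz_toHyperboloid, hy, map_add, map_smul, map_smul, smul_eq_mul, smul_eq_mul]
  have hsq : cosh (dist x y) ^ 2 = lorentz X A ^ 2 - lorentz X B ^ 2
      + (sinh s * lorentz X A + cosh s * lorentz X B) ^ 2 := by
    rw [hcosh]
    linear_combination (lorentz X A ^ 2 - lorentz X B ^ 2) * cosh_sq s
  refine abs_le_of_sq_le_sq ?_ (sinh_nonneg_iff.mpr dist_nonneg)
  nlinarith [cosh_sq (dist x y), sq_nonneg (sinh s * lorentz X A + cosh s * lorentz X B)]

lemma abs_lorentz_lorentzCross_le_sinh_infDist {A B : V} (hAB : IsOrthonormalPair A B)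
    {δ : ℝ → UpperHalfPlane} (hδ : ∀ s, toHyperboloid (δ s) = cosh s • A + sinh s • B)
    (x : UpperHalfPlane) :
    |lorentz (toHyperboloid x) (lorentzCross A B)| ≤ sinh (infDist x (Set.range δ)) := by
  rw [← sinh_arsinh |_|, sinh_le_sinh, le_infDist (Set.range_nonempty δ)]
  rintro _ ⟨s, rfl⟩
  rw [← arsinh_sinh (dist x (δ s)), arsinh_le_arsinh]
  exact abs_lorentz_lorentzCross_le_sinh_dist hAB (hδ s) x

/-- Coordinates in an orthonormal frame `(A, B, N)`: `A' = (a, b, c)`, `B' = (a', b', c')`,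
`W = (μ, ν, τ)` and `U = (v, 0, w)`, as in `lorentz_sq_sub_one_le`. -/
lemma sq_sub_one_le_of_frame_coordinates (a b c a' b' c' μ ν τ v w : ℝ) {η : ℝ}
    (hη : η ≤ 1 / 10) (hμ : |μ| ≤ η) (hν : |ν| ≤ η)
    (habc : a ^ 2 - b ^ 2 - c ^ 2 = 1) (habc' : a' ^ 2 - b' ^ 2 - c' ^ 2 = -1)
    (hμντ : μ ^ 2 - ν ^ 2 - τ ^ 2 = -1) (hvw : v ^ 2 - w ^ 2 = 1)
    (hA'W : a * μ - b * ν - c * τ = 0) (hB'W : a' * μ - b' * ν - c' * τ = 0)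
    (hA'B' : a * a' - b * b' - c * c' = 0) (hUB' : v * a' - w * c' = 0) :
    a ^ 2 - 1 ≤ 16 * η ^ 2 := by
  have hμ2 : μ ^ 2 ≤ η ^ 2 := sq_le_sq' (abs_le.mp hμ).1 (abs_le.mp hμ).2
  have hν2 : ν ^ 2 ≤ η ^ 2 := sq_le_sq' (abs_le.mp hν).1 (abs_le.mp hν).2
  have hη2 : η ^ 2 ≤ 1 / 100 := by nlinarith [abs_nonneg μ]
  have hτ : 99 / 100 ≤ τ ^ 2 := by linarith [sq_nonneg μ]
  have ha'c' : a' ^ 2 ≤ c' ^ 2 := by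
    have h : v ^ 2 * a' ^ 2 = w ^ 2 * c' ^ 2 := by linear_combination (v * a' + w * c') * hUB'
    nlinarith [mul_le_mul_of_nonneg_right (show w ^ 2 ≤ v ^ 2 by linarith) (sq_nonneg c')]
  have hb'1 : b' ^ 2 ≤ 1 := by linarith
  have hc' : c' ^ 2 ≤ 3 * η ^ 2 := by
    have h := mul_sq_le_of_mul_eq_sub (x := a') (y := b') (z := c') (μ := μ) (ν := ν)
      (by linear_combination -hB'W) hτ
    have h₁ := mul_le_mul ha'c' hμ2 (sq_nonneg μ) (sq_nonneg c')
    have h₂ := mul_le_mul hb'1 hν2 (sq_nonneg ν) zero_le_one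
    have h₃ := mul_le_mul_of_nonneg_left hη2 (sq_nonneg c')
    linarith [sq_nonneg η]
  have hb' : 97 / 100 ≤ b' ^ 2 := by linarith [sq_nonneg a']
  have hba : b ^ 2 ≤ a ^ 2 := by linarith [sq_nonneg c]
  have hc : c ^ 2 ≤ 5 * a ^ 2 * η ^ 2 := by
    have h := mul_sq_le_of_mul_eq_sub (x := a) (y := b) (z := c) (μ := μ) (ν := ν)
      (by linear_combination -hA'W) hτ
    linarith [mul_le_mul_of_nonneg_left hμ2 (sq_nonneg a),
      mul_le_mul hba hν2 (sq_nonneg ν) (sq_nonneg a), sq_nonneg (a * η)]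
  have hb : b ^ 2 ≤ 7 * a ^ 2 * η ^ 2 := by
    have h := mul_sq_le_of_mul_eq_sub (x := a) (y := c) (z := b) (μ := a') (ν := c')
      (by linear_combination -hA'B') hb'
    linarith [mul_le_mul_of_nonneg_left (ha'c'.trans hc') (sq_nonneg a),
      mul_le_mul hc hc' (sq_nonneg c') (by positivity),
      mul_le_mul_of_nonneg_left hη2 (by positivity : 0 ≤ a ^ 2 * η ^ 2), sq_nonneg (a * η)]
  have ha : 0 ≤ a ^ 2 - 1 := by linarith [sq_nonneg b, sq_nonneg c]
  linarith [mul_le_mul_of_nonneg_left hη2 ha]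

/-- `A, A'` are the feet of `U` on the geodesic planes spanned by `(A, B)` and `(A', B')`, and
`W` is the normal of the second plane. -/
theorem lorentz_sq_sub_one_le {A B A' B' U W : V} {η : ℝ} (hAB : IsOrthonormalPair A B)
    (hAB' : IsOrthonormalPair A' B') (hU : lorentz U U = 1) (hUB : lorentz U B = 0)
    (hUB' : lorentz U B' = 0) (hW : lorentz W W = -1) (hA'W : lorentz A' W = 0)
    (hB'W : lorentz B' W = 0) (hη : η ≤ 1 / 10) (hAW : |lorentz A W| ≤ η)
    (hBW : |lorentz B W| ≤ η) :
    lorentz A A' ^ 2 - 1 ≤ 16 * η ^ 2 := by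
  set N := lorentzCross A B
  have coords := hAB.lorentz_eq
  rw [lorentz_comm] at hAW hBW ⊢
  exact sq_sub_one_le_of_frame_coordinates _ (lorentz A' B) (lorentz A' N)
    (lorentz B' A) (lorentz B' B) (lorentz B' N) _ _ (lorentz W N) (lorentz U A) (lorentz U N)
    hη hAW hBW
    (by linear_combination (coords A' A').symm.trans hAB'.timelike)
    (by linear_combination (coords B' B').symm.trans hAB'.spacelike)
    (by linear_combination (coords W W).symm.trans hW)
    (by linear_combination (coords U U).symm.trans hU + lorentz U B * hUB)
    (by linear_combination (coords A' W).symm.trans hA'W)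
    (by linear_combination (coords B' W).symm.trans hB'W)
    (by linear_combination (coords A' B').symm.trans hAB'.orthogonal)
    (by linear_combination (coords U B').symm.trans hUB' + lorentz B' B * hUB)

end HyperboloidModel

open HyperboloidModel in
theorem dist_le_of_forall_infDist_le {g h : Set UpperHalfPlane} (hg : IsCompleteGeodesic g)
    (hh : IsCompleteGeodesic h) {u p q : UpperHalfPlane} (hp : p ∈ g)
    (hpu : dist u p = infDist u g) (hq : q ∈ h) (hqu : dist u q = infDist u h) {T ζ : ℝ}
    (hT : 0 < T) (hsmall : sinh ζ / sinh T ≤ 1 / 10)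
    (hclose : ∀ x ∈ g, dist x p = T → infDist x h ≤ ζ) :
    dist p q ≤ 4 * (sinh ζ / sinh T) := by
  obtain ⟨γ, hγ, rfl, rfl⟩ := hg.exists_isometry_map_zero hp
  obtain ⟨δ, hδ, rfl, rfl⟩ := hh.exists_isometry_map_zero hq
  obtain ⟨B, hAB, hγB⟩ := hγ.exists_isOrthonormalPair
  obtain ⟨B', hAB', hδB'⟩ := hδ.exists_isOrthonormalPair
  set A := toHyperboloid (γ 0)
  set W := lorentzCross (toHyperboloid (δ 0)) B'
  have hUB := lorentz_eq_zero_of_forall_dist_le hγB fun t =>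
    hpu ▸ infDist_le_dist_of_mem (Set.mem_range_self t)
  have hUB' := lorentz_eq_zero_of_forall_dist_le hδB' fun t =>
    hqu ▸ infDist_le_dist_of_mem (Set.mem_range_self t)
  have hW : ∀ t, |t| = T → |cosh t * lorentz A W + sinh t * lorentz B W| ≤ sinh ζ := by
    intro t ht
    have hdist : dist (γ t) (γ 0) = T := by rw [hγ.dist_eq, Real.dist_eq, sub_zero, ht]
    have h := (abs_lorentz_lorentzCross_le_sinh_infDist hAB' hδB' (γ t)).trans
      (sinh_le_sinh.mpr (hclose _ (Set.mem_range_self t) hdist))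
    rwa [hγB t, LinearMap.map_add₂, LinearMap.map_smul₂, LinearMap.map_smul₂] at h
  obtain ⟨hAW, hBW⟩ := abs_le_div_sinh_of_abs_cosh_mul_add_sinh_mul_le hT (hW T (abs_of_pos hT))
    (by simpa [sub_eq_add_neg] using hW (-T) (by rw [abs_neg, abs_of_pos hT]))
  have key := lorentz_sq_sub_one_le hAB hAB' (lorentz_toHyperboloid_self u) hUB hUB'
    hAB'.lorentz_lorentzCross_self (lorentz_lorentzCross_left _ _)
    (lorentz_lorentzCross_right _ _) hsmall hAW hBW
  rw [lorentz_toHyperboloid, cosh_sq] at key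
  refine (self_le_sinh_iff.mpr dist_nonneg).trans (le_of_sq_le_sq ?_ ?_)
  · linarith
  · linarith [(abs_nonneg _).trans hAW]

theorem projection_estimate_general
    (r b : ℝ) (hb0 : 0 < b) :
    ∃ ζ₀ C : ℝ, 0 < ζ₀ ∧ ζ₀ < 1 ∧ 0 < C ∧
      ∀ ζ : ℝ, 0 < ζ → ζ < ζ₀ →
      ∀ g : Set UpperHalfPlane, IsCompleteGeodesic g →
      ∀ u : UpperHalfPlane, infDist u g ≤ r →
      ∀ h : Set UpperHalfPlane, IsCompleteGeodesic h →
        HClose g h (closedBall u (b * Real.log (1 / ζ))) ζ →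
      ∀ p ∈ g, dist u p = infDist u g →
      ∀ q ∈ h, dist u q = infDist u h →
        dist p q ≤ C * ζ ^ (1 + b) := by
  refine ⟨min (1 / 100) (exp (-(r + 1) / b)), 32 * exp r, by positivity,
    (min_le_left _ _).trans_lt (by norm_num), by positivity, ?_⟩
  rintro ζ hζ hζ₀ g hg u hu h hh ⟨-, hhB, hH⟩ p hp hpu q hq hqu
  set R := b * log (1 / ζ)
  have hR : R = -(log ζ * b) := by simp only [R, one_div, log_inv]; ring
  have hT : 1 ≤ R - r := by
    have := (log_lt_log hζ (hζ₀.trans_le (min_le_right _ _))).le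
    rw [log_exp, le_div_iff₀ hb0] at this
    linarith
  have hclose : ∀ x ∈ g, dist x p = R - r → infDist x h ≤ ζ := fun x hx hxp =>
    infDist_le_of_hausdorffDist_inter_le isBounded_closedBall hhB hH
      ⟨hx, mem_closedBall.mpr (by linarith [dist_triangle x p u, dist_comm p u])⟩
  have hζ₁ : ζ ≤ 1 / 100 := (hζ₀.trans_le (min_le_left _ _)).le
  have hη := sinh_div_sinh_le hζ.le (by linarith) hT
  have hexp : exp (-(R - r)) = exp r * ζ ^ b := by
    rw [rpow_def_of_pos hζ, ← exp_add, hR]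
    ring_nf
  have hsmall : sinh ζ / sinh (R - r) ≤ 1 / 10 :=
    hη.trans (by nlinarith [exp_le_one_iff.mpr (by linarith : -(R - r) ≤ 0)])
  calc dist p q ≤ 4 * (sinh ζ / sinh (R - r)) :=
        dist_le_of_forall_infDist_le hg hh hp hpu hq hqu (by linarith) hsmall hclose
    _ ≤ 4 * (8 * ζ * exp (-(R - r))) := by gcongr
    _ = 32 * exp r * ζ ^ (1 + b) := by rw [hexp, rpow_add hζ, rpow_one]; ring

/-- Projection estimate (Lemma 4.2): closest-point projections of `u` to
Hausdorff-close geodesics are `O(ζ^{1+b})`-close. -/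
theorem projection_estimate
    (r b : ℝ) (hr : 0 ≤ r) (hb0 : 0 < b) (hb1 : b ≤ 1) :
    ∃ ζ₀ C : ℝ, 0 < ζ₀ ∧ ζ₀ < 1 ∧ 0 < C ∧
      ∀ ζ : ℝ, 0 < ζ → ζ < ζ₀ →
      ∀ g : Set UpperHalfPlane, IsCompleteGeodesic g →
      ∀ u : UpperHalfPlane, infDist u g ≤ r →
      ∀ h : Set UpperHalfPlane, IsCompleteGeodesic h →
        HClose g h (closedBall u (b * Real.log (1 / ζ))) ζ →
      ∀ p ∈ g, dist u p = infDist u g →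
      ∀ q ∈ h, dist u q = infDist u h →
        dist p q ≤ C * ζ ^ (1 + b) :=
  projection_estimate_general r b hb0
end

section
/- (Projection estimate for arbitrary balls, Corollary 4.3.) Fix r ≥ 0. There exists C > 0, depending only on r, such that for every ζ ∈ (0,1) the following holds. Let g be a complete geodesic in ℍ, let u ∈ ℍ satisfy d(u,g) ≤ r, and let B be any closed ball centered at u that meets g. Suppose h is a complete geodesic that is ζ-Hausdorff-close to g on B. Then for every closest-point projection p of u to g and every closest-point projection q of u to h, one has dist(p,q) ≤ C·ζ. -/
/-!
Along a geodesic `γ`, the hyperboloid model turns `t ↦ cosh d(u, γ t)` into a solution of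
d'Alembert's equation `f (t + b) + f (t - b) = 2 cosh b f t`; since it is minimal at the foot
`p = γ t₀` of the perpendicular, it equals `cosh d(u, p) cosh (t - t₀)`. Hence a closed ball
centred at `u` meets `g` and `h` in geodesic segments whose midpoints are the projections `p`
and `q`. For two `ζ`-Hausdorff-close segments, following the endpoints and the midpoint of one to
nearby points of the other forces the midpoints to be `8ζ`-close.
-/

open Metric

open scoped UpperHalfPlane
open Real Filter Set Topology

def minkowskiForm (x y : Fin 3 → ℝ) : ℝ :=
  x 0 * y 0 - x 1 * y 1 - x 2 * y 2

theorem eq_zero_of_minkowskiForm_eq_zero {d x : Fin 3 → ℝ} (hdd : minkowskiForm d d = 0)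
    (hdx : minkowskiForm d x = 0) (hx : 0 < minkowskiForm x x) : d = 0 := by
  simp only [minkowskiForm] at hdd hdx hx
  -- Cauchy–Schwarz on the spatial part, in the form of Lagrange's identity.
  have hlagrange :
      d 0 ^ 2 * (x 0 * x 0 - x 1 * x 1 - x 2 * x 2) = -(d 1 * x 2 - d 2 * x 1) ^ 2 := by
    linear_combination (d 0 * x 0 + d 1 * x 1 + d 2 * x 2) * hdx - (x 1 ^ 2 + x 2 ^ 2) * hdd
  have hd0 : d 0 = 0 := by
    have : d 0 ^ 2 ≤ 0 :=
      nonpos_of_mul_nonpos_left (hlagrange ▸ neg_nonpos.2 (sq_nonneg _)) hx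
    exact pow_eq_zero_iff two_ne_zero |>.1 (le_antisymm this (sq_nonneg _))
  have hd1 : d 1 = 0 := by nlinarith [sq_nonneg (d 1), sq_nonneg (d 2)]
  have hd2 : d 2 = 0 := by nlinarith [sq_nonneg (d 1), sq_nonneg (d 2)]
  ext i
  fin_cases i <;> assumption

namespace UpperHalfPlane

/-- The hyperboloid model: an isometry of `ℍ` onto `{x | minkowskiForm x x = 1, 0 < x 0}`. -/
noncomputable def toHyperboloid (z : ℍ) : Fin 3 → ℝ :=
  ![(z.re ^ 2 + z.im ^ 2 + 1) / (2 * z.im), z.re / z.im, (z.re ^ 2 + z.im ^ 2 - 1) / (2 * z.im)]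

theorem cosh_dist_eq_minkowskiForm (z w : ℍ) :
    cosh (dist z w) = minkowskiForm (toHyperboloid z) (toHyperboloid w) := by
  have hz := z.im_pos.ne'
  have hw := w.im_pos.ne'
  rw [cosh_dist']
  simp only [minkowskiForm, toHyperboloid, Matrix.cons_val]
  field_simp
  ring

theorem minkowskiForm_toHyperboloid_self (z : ℍ) :
    minkowskiForm (toHyperboloid z) (toHyperboloid z) = 1 := by
  rw [← cosh_dist_eq_minkowskiForm, dist_self, cosh_zero]

theorem toHyperboloid_add_toHyperboloid_of_midpoint {z w m : ℍ}
    (hzm : dist z m = dist z w / 2) (hwm : dist w m = dist z w / 2) :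
    toHyperboloid z + toHyperboloid w = (2 * cosh (dist z w / 2)) • toHyperboloid m := by
  set c := cosh (dist z w / 2)
  have hzw : minkowskiForm (toHyperboloid z) (toHyperboloid w) = 2 * c ^ 2 - 1 := by
    rw [← cosh_dist_eq_minkowskiForm, ← add_halves (dist z w), cosh_add]
    linear_combination sinh_sq (dist z w / 2)
  have hzm' : minkowskiForm (toHyperboloid z) (toHyperboloid m) = c := by
    rw [← cosh_dist_eq_minkowskiForm, hzm]
  have hwm' : minkowskiForm (toHyperboloid w) (toHyperboloid m) = c := by
    rw [← cosh_dist_eq_minkowskiForm, hwm]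
  have hz := minkowskiForm_toHyperboloid_self z
  have hw := minkowskiForm_toHyperboloid_self w
  have hm := minkowskiForm_toHyperboloid_self m
  rw [← sub_eq_zero]
  apply eq_zero_of_minkowskiForm_eq_zero (x := toHyperboloid m) _ _ (by rw [hm]; exact one_pos)
  all_goals
    simp only [minkowskiForm, Pi.add_apply, Pi.sub_apply, Pi.smul_apply, smul_eq_mul] at *
  · linear_combination hz + hw + 2 * hzw - 4 * c * hzm' - 4 * c * hwm' + 4 * c ^ 2 * hm
  · linear_combination hzm' + hwm' - 2 * c * hm

theorem cosh_dist_add_cosh_dist_of_midpoint {z w m : ℍ}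
    (hzm : dist z m = dist z w / 2) (hwm : dist w m = dist z w / 2) (u : ℍ) :
    cosh (dist u z) + cosh (dist u w) = 2 * cosh (dist z w / 2) * cosh (dist u m) := by
  simp only [cosh_dist_eq_minkowskiForm]
  have h := congrFun (toHyperboloid_add_toHyperboloid_of_midpoint hzm hwm)
  simp only [Pi.add_apply, Pi.smul_apply, smul_eq_mul] at h
  simp only [minkowskiForm]
  linear_combination toHyperboloid u 0 * h 0 - toHyperboloid u 1 * h 1 - toHyperboloid u 2 * h 2

end UpperHalfPlane

theorem Real.eq_zero_of_map_two_mul_eq {e : ℝ → ℝ} {A : ℝ}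
    (hdouble : ∀ x, e (2 * x) = 2 * cosh x * e x) (hbound : ∀ x, |e x| ≤ A * (cosh x - 1))
    (s : ℝ) : e s = 0 := by
  rcases eq_or_ne s 0 with rfl | hs
  · simpa using hbound 0
  have hA : 0 ≤ A := by
    have := (abs_nonneg _).trans (hbound 1)
    exact nonneg_of_mul_nonneg_left this (sub_pos.2 (one_lt_cosh.2 one_ne_zero))
  -- `e / sinh` is invariant under halving.
  have hhalve : ∀ n : ℕ, e s * sinh (s / 2 ^ n) = sinh s * e (s / 2 ^ n) := by
    intro n
    induction n with
    | zero => simp [mul_comm]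
    | succ n ih =>
      set y := s / 2 ^ (n + 1)
      rw [show s / 2 ^ n = 2 * y by simp only [y, pow_succ]; ring, hdouble, sinh_two_mul] at ih
      refine mul_left_cancel₀ (cosh_pos y).ne' ?_
      linear_combination ih / 2
  -- ... while `|e y| ≤ A (cosh y - 1) ≤ A sinh² y` is small compared with `sinh y`.
  have hle : ∀ n : ℕ, |e s| ≤ A * |sinh s| * |sinh (s / 2 ^ n)| := by
    intro n
    set y := s / 2 ^ n
    have hy : 0 < |sinh y| := abs_pos.2 (sinh_ne_zero.2 (by positivity))
    refine le_of_mul_le_mul_right ?_ hy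
    calc |e s| * |sinh y| = |sinh s| * |e y| := by rw [← abs_mul, hhalve, abs_mul]
      _ ≤ |sinh s| * (A * |sinh y| ^ 2) := by
        gcongr
        refine (hbound y).trans (mul_le_mul_of_nonneg_left ?_ hA)
        nlinarith [cosh_sq y, one_le_cosh y, sq_abs (sinh y)]
      _ = A * |sinh s| * |sinh y| * |sinh y| := by ring
  have hlim : Tendsto (fun n : ℕ => A * |sinh s| * |sinh (s / 2 ^ n)|) atTop (𝓝 0) := by
    have hy : Tendsto (fun n : ℕ => s / 2 ^ n) atTop (𝓝 0) := by
      have h2 := tendsto_pow_atTop_nhds_zero_of_lt_one (r := (2 : ℝ)⁻¹) (by norm_num) (by norm_num)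
      simpa [div_eq_mul_inv] using h2.const_mul s
    simpa using ((continuous_abs.comp continuous_sinh).tendsto 0 |>.comp hy).const_mul
      (A * |sinh s|)
  exact abs_nonpos_iff.1 (ge_of_tendsto' hlim hle)

/-- No continuity is assumed: the minimum at `0` takes its place. -/
theorem Real.eq_mul_cosh_of_dalembert {f : ℝ → ℝ}
    (hf : ∀ t b, f (t + b) + f (t - b) = 2 * cosh b * f t) (hmin : ∀ t, f 0 ≤ f t) (s : ℝ) :
    f s = f 0 * cosh s := by
  have hodd : ∀ x, f (-x) - f 0 * cosh x = -(f x - f 0 * cosh x) := by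
    intro x
    have := hf 0 x
    rw [zero_add, zero_sub] at this
    linarith
  have hdouble : ∀ x, f (2 * x) - f 0 * cosh (2 * x) = 2 * cosh x * (f x - f 0 * cosh x) := by
    intro x
    have := hf x x
    rw [sub_self, ← two_mul] at this
    rw [cosh_two_mul]
    linear_combination this + f 0 * cosh_sq x
  have hbound : ∀ x, |f x - f 0 * cosh x| ≤ f 0 * (cosh x - 1) := by
    intro x
    have := hodd x
    rw [abs_le]
    constructor <;> linarith [hmin x, hmin (-x)]
  linarith [Real.eq_zero_of_map_two_mul_eq hdouble hbound s]

theorem Isometry.cosh_dist_add_cosh_dist {γ : ℝ → ℍ} (hγ : Isometry γ) (u : ℍ) (t b : ℝ) :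
    cosh (dist u (γ (t + b))) + cosh (dist u (γ (t - b))) = 2 * cosh b * cosh (dist u (γ t)) := by
  have hdist : ∀ a a', dist (γ a) (γ a') = |a - a'| := fun a a' => by rw [hγ.dist_eq, Real.dist_eq]
  have hhalf : dist (γ (t + b)) (γ (t - b)) / 2 = |b| := by
    rw [hdist, show t + b - (t - b) = 2 * b by ring, abs_mul, abs_two]
    ring
  have h := UpperHalfPlane.cosh_dist_add_cosh_dist_of_midpoint (m := γ t)
    (by rw [hhalf, hdist, add_sub_cancel_left])
    (by rw [hhalf, hdist, sub_sub_cancel_left, abs_neg]) u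
  rwa [hhalf, cosh_abs] at h

theorem Isometry.cosh_dist_eq_mul_cosh {γ : ℝ → ℍ} (hγ : Isometry γ) {u : ℍ}
    (hmin : ∀ t, dist u (γ 0) ≤ dist u (γ t)) (s : ℝ) :
    cosh (dist u (γ s)) = cosh (dist u (γ 0)) * cosh s :=
  Real.eq_mul_cosh_of_dalembert (f := fun t => cosh (dist u (γ t))) (hγ.cosh_dist_add_cosh_dist u)
    (fun t => cosh_le_cosh.2 <| by simpa only [abs_of_nonneg dist_nonneg] using hmin t) s

theorem Real.cosh_le_iff_abs_le_arcosh {c : ℝ} (hc : 1 ≤ c) (s : ℝ) :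
    cosh s ≤ c ↔ |s| ≤ arcosh c := by
  conv_lhs => rw [← cosh_arcosh hc]
  rw [cosh_le_cosh, abs_of_nonneg (arcosh_nonneg hc)]

/-- By Pythagoras, `cosh d(u, δ s) = cosh d(u, p) * cosh s`, so the ball cuts out of the geodesic
a segment centred at the foot `p`. -/
theorem IsCompleteGeodesic.exists_isometry_mem_closedBall_iff {g : Set ℍ}
    (hg : IsCompleteGeodesic g) {u p : ℍ} (hp : p ∈ g) (hpu : dist u p = infDist u g) {R : ℝ}
    (hgR : (g ∩ closedBall u R).Nonempty) :
    ∃ δ : ℝ → ℍ, Isometry δ ∧ δ 0 = p ∧ range δ = g ∧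
      ∃ S, 0 ≤ S ∧ ∀ s, δ s ∈ closedBall u R ↔ |s| ≤ S := by
  obtain ⟨γ, hγ, rfl⟩ := hg
  obtain ⟨t₀, rfl⟩ := hp
  set δ := fun s => γ (t₀ + s)
  have hδ : Isometry δ := hγ.comp (isometry_add_left t₀)
  have hmin : ∀ t, dist u (δ 0) ≤ dist u (δ t) := fun t => by
    simpa only [δ, add_zero, hpu] using infDist_le_dist_of_mem (mem_range_self _)
  have hR : dist u (δ 0) ≤ R := by
    obtain ⟨x, hxg, hxR⟩ := hgR
    simpa only [δ, add_zero, hpu] using (infDist_le_dist_of_mem hxg).trans (mem_closedBall'.1 hxR)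
  have hR0 : 0 ≤ R := dist_nonneg.trans hR
  have hpos : 0 < cosh (dist u (δ 0)) := cosh_pos _
  have hc : 1 ≤ cosh R / cosh (dist u (δ 0)) := by
    rw [one_le_div hpos, cosh_le_cosh, abs_of_nonneg dist_nonneg, abs_of_nonneg hR0]
    exact hR
  refine ⟨δ, hδ, by simp [δ], (add_left_surjective t₀).range_comp γ, _, arcosh_nonneg hc,
    fun s => ?_⟩
  rw [← cosh_le_iff_abs_le_arcosh hc, le_div_iff₀' hpos, ← hδ.cosh_dist_eq_mul_cosh hmin,
    mem_closedBall', cosh_le_cosh, abs_of_nonneg dist_nonneg, abs_of_nonneg hR0]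

theorem exists_dist_le_of_hausdorffDist_le {X : Type*} [PseudoMetricSpace X] {s t : Set X} {x : X}
    {ζ : ℝ} (hs : Bornology.IsBounded s) (ht : IsCompact t) (htne : t.Nonempty) (hx : x ∈ s)
    (hst : hausdorffDist s t ≤ ζ) : ∃ y ∈ t, dist x y ≤ ζ := by
  obtain ⟨y, hy, hxy⟩ := ht.exists_infDist_eq_dist htne x
  refine ⟨y, hy, hxy ▸ (infDist_le_hausdorffDist_of_mem hx ?_).trans hst⟩
  exact hausdorffEDist_ne_top_of_nonempty_of_bounded ⟨x, hx⟩ htne hs ht.isBounded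

theorem exists_abs_le_dist_le_of_hausdorffDist_le {X : Type*} [MetricSpace X] {δ ε : ℝ → X}
    (hε : Isometry ε) {B : Set X} (hB : IsCompact B) {S T ζ : ℝ} (hT : 0 ≤ T)
    (hδB : ∀ s, δ s ∈ B ↔ |s| ≤ S) (hεB : ∀ t, ε t ∈ B ↔ |t| ≤ T)
    (hδε : hausdorffDist (range δ ∩ B) (range ε ∩ B) ≤ ζ) {s : ℝ} (hs : |s| ≤ S) :
    ∃ t, |t| ≤ T ∧ dist (δ s) (ε t) ≤ ζ := by
  obtain ⟨_, ⟨⟨t, rfl⟩, htB⟩, hst⟩ := exists_dist_le_of_hausdorffDist_le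
    (hB.isBounded.subset inter_subset_right) (hB.inter_left hε.isClosedEmbedding.isClosed_range)
    ⟨ε 0, mem_range_self 0, (hεB 0).2 (by simpa using hT)⟩ ⟨mem_range_self s, (hδB s).2 hs⟩ hδε
  exact ⟨t, (hεB t).1 htB, hst⟩

theorem Isometry.abs_sub_le_of_dist_le {X : Type*} [PseudoMetricSpace X] {δ ε : ℝ → X}
    (hδ : Isometry δ) (hε : Isometry ε) {a b a' b' ζ : ℝ} (ha : dist (δ a) (ε a') ≤ ζ)
    (hb : dist (δ b) (ε b') ≤ ζ) : |a - b| ≤ |a' - b'| + 2 * ζ := by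
  have h := dist_triangle4 (δ a) (ε a') (ε b') (δ b)
  rw [hδ.dist_eq, hε.dist_eq, Real.dist_eq, Real.dist_eq, dist_comm (ε b')] at h
  linarith

theorem Isometry.dist_apply_zero_le_of_segments_close {X : Type*} [PseudoMetricSpace X]
    {δ ε : ℝ → X} (hδ : Isometry δ) (hε : Isometry ε) {S T ζ : ℝ} (hS : 0 ≤ S) (hT : 0 ≤ T)
    (hδε : ∀ s, |s| ≤ S → ∃ t, |t| ≤ T ∧ dist (δ s) (ε t) ≤ ζ)
    (hεδ : ∀ t, |t| ≤ T → ∃ s, |s| ≤ S ∧ dist (ε t) (δ s) ≤ ζ) :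
    dist (δ 0) (ε 0) ≤ 8 * ζ := by
  obtain ⟨t₁, ht₁, hδt₁⟩ := hδε (-S) (by rw [abs_neg, abs_of_nonneg hS])
  obtain ⟨t₂, ht₂, hδt₂⟩ := hδε S (by rw [abs_of_nonneg hS])
  obtain ⟨t₀, ht₀, hδt₀⟩ := hδε 0 (by simpa using hS)
  obtain ⟨s₁, hs₁, hεs₁⟩ := hεδ (-T) (by rw [abs_neg, abs_of_nonneg hT])
  obtain ⟨s₂, hs₂, hεs₂⟩ := hεδ T (by rw [abs_of_nonneg hT])
  -- The images of `-S`, `S` and `0` in `ε`'s parameter are nearly as far apart as `-S`, `S`, `0`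
  -- themselves, while `T ≤ S + ζ`; this squeezes `t₀` into `[-7ζ, 7ζ]`.
  have h₁₂ := hδ.abs_sub_le_of_dist_le hε hδt₁ hδt₂
  have h₁₀ := hδ.abs_sub_le_of_dist_le hε hδt₁ hδt₀
  have h₂₀ := hδ.abs_sub_le_of_dist_le hε hδt₂ hδt₀
  have hTS := hε.abs_sub_le_of_dist_le hδ hεs₁ hεs₂
  have ht₀7 : |t₀| ≤ 7 * ζ := by
    rw [abs_le] at ht₁ ht₂ ht₀ hs₁ hs₂ ⊢
    have hs₁₂ : |s₁ - s₂| ≤ 2 * S := abs_sub_le_iff.2 ⟨by linarith, by linarith⟩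
    have := neg_le_abs (-S - S)
    have := neg_le_abs (-S - 0)
    have := le_abs_self (S - 0)
    have := neg_le_abs (-T - T)
    rcases abs_cases (t₁ - t₂) with ⟨e₁₂, -⟩ | ⟨e₁₂, -⟩ <;>
      rcases abs_cases (t₁ - t₀) with ⟨e₁₀, -⟩ | ⟨e₁₀, -⟩ <;>
      rcases abs_cases (t₂ - t₀) with ⟨e₂₀, -⟩ | ⟨e₂₀, -⟩ <;>
      constructor <;> linarith
  calc dist (δ 0) (ε 0) ≤ dist (δ 0) (ε t₀) + dist (ε t₀) (ε 0) := dist_triangle _ _ _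
    _ ≤ ζ + |t₀| := by rw [hε.dist_eq, Real.dist_eq, sub_zero]; exact add_le_add_left hδt₀ _
    _ ≤ 8 * ζ := by linarith

theorem projection_estimate_ball_general (r : ℝ) :
    ∃ C : ℝ, 0 < C ∧
      ∀ ζ : ℝ, 0 < ζ → ζ < 1 →
      ∀ g : Set UpperHalfPlane, IsCompleteGeodesic g →
      ∀ u : UpperHalfPlane, infDist u g ≤ r →
      ∀ R : ℝ, (g ∩ closedBall u R).Nonempty →
      ∀ h : Set UpperHalfPlane, IsCompleteGeodesic h →
        HClose g h (closedBall u R) ζ →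
      ∀ p ∈ g, dist u p = infDist u g →
      ∀ q ∈ h, dist u q = infDist u h →
        dist p q ≤ C * ζ := by
  refine ⟨8, by norm_num, ?_⟩
  intro ζ _ _ g hg u _ R _ h hh ⟨hgR, hhR, hgh⟩ p hp hpu q hq hqu
  obtain ⟨δ, hδ, rfl, rfl, S, hS, hδR⟩ := hg.exists_isometry_mem_closedBall_iff hp hpu hgR
  obtain ⟨ε, hε, rfl, rfl, T, hT, hεR⟩ := hh.exists_isometry_mem_closedBall_iff hq hqu hhR
  have hB := isCompact_closedBall u R
  exact hδ.dist_apply_zero_le_of_segments_close hε hS hT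
    (fun _ hs => exists_abs_le_dist_le_of_hausdorffDist_le hε hB hT hδR hεR hgh hs)
    (fun _ ht => exists_abs_le_dist_le_of_hausdorffDist_le hδ hB hS hεR hδR
      (by rwa [hausdorffDist_comm]) ht)

/-- Projection estimate for arbitrary balls (Corollary 4.3). -/
theorem projection_estimate_ball (r : ℝ) (hr : 0 ≤ r) :
    ∃ C : ℝ, 0 < C ∧
      ∀ ζ : ℝ, 0 < ζ → ζ < 1 →
      ∀ g : Set UpperHalfPlane, IsCompleteGeodesic g →
      ∀ u : UpperHalfPlane, infDist u g ≤ r →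
      ∀ R : ℝ, (g ∩ closedBall u R).Nonempty →
      ∀ h : Set UpperHalfPlane, IsCompleteGeodesic h →
        HClose g h (closedBall u R) ζ →
      ∀ p ∈ g, dist u p = infDist u g →
      ∀ q ∈ h, dist u q = infDist u h →
        dist p q ≤ C * ζ :=
  projection_estimate_ball_general r
end

section
/- (Norm bound for a transvection, equation (7.3) of the paper, stated for the imaginary axis.) Let ℓ ∈ ℝ and let T ∈ SL(2,ℝ) be the diagonal matrix with diagonal entries e^{ℓ/2} and e^{−ℓ/2}, so that T acts on ℍ by z ↦ e^{ℓ}·z and translates the positive imaginary axis I = {z ∈ ℍ : Re z = 0} (a complete geodesic) by hyperbolic distance |ℓ|. Then for all x̂, x ∈ ℍ one has dist(T•x, x)·exp(−dist(x̂,x)) ≤ |ℓ|·exp(d(x̂, I)), where d(x̂, I) = `Metric.infDist x̂ I`. (Equivalently, ‖T‖_{x̂} := d_x̂(id, T) ≤ |ℓ|·e^{d(x̂,I)}.) -/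
/-!
`T` acts on `ℍ` as the dilation `z ↦ e^ℓ z`, which moves `x` by
`2 arsinh (|sinh (ℓ/2)| · ‖x‖ / Im x)`. Since `‖x‖ / Im x ≥ 1` and `sinh` is superhomogeneous on
`[0, ∞)` (`c sinh t ≤ sinh (c t)` for `c ≥ 1`), this is at most `|ℓ| · ‖x‖ / Im x`. For `z` on the
imaginary axis the formula for `cosh (dist x z)` together with AM–GM gives
`‖x‖ / Im x ≤ cosh (dist x z)`, hence `‖x‖ / Im x ≤ exp (d(x, I))`. Finally `d(·, I)` is
`1`-Lipschitz, so `exp (d(x, I)) ≤ exp (d(x̂, I)) · exp (dist x̂ x)`.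
-/

open Metric

namespace Real

theorem mul_sinh_le_sinh_mul {c t : ℝ} (hc : 1 ≤ c) (ht : 0 ≤ t) :
    c * sinh t ≤ sinh (c * t) := by
  have hmono : MonotoneOn (fun t => sinh (c * t) - c * sinh t) (Set.Ici 0) := by
    refine monotoneOn_of_hasDerivWithinAt_nonneg (f' := fun t => c * (cosh (c * t) - cosh t))
      (convex_Ici 0) (by fun_prop) (fun x _ => ?_) (fun x hx => ?_)
    · refine HasDerivAt.hasDerivWithinAt ?_
      refine ((((hasDerivAt_id x).const_mul c).sinh).sub
        ((hasDerivAt_sinh x).const_mul c)).congr_deriv ?_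
      simp only [id]; ring
    · rw [interior_Ici, Set.mem_Ioi] at hx
      have : cosh x ≤ cosh (c * x) := by
        rw [cosh_le_cosh, abs_of_pos hx, abs_of_pos (by positivity)]
        exact le_mul_of_one_le_left hx.le hc
      exact mul_nonneg (by linarith) (sub_nonneg.2 this)
  simpa using hmono Set.self_mem_Ici ht ht

theorem cosh_le_exp_of_nonneg {t : ℝ} (ht : 0 ≤ t) : cosh t ≤ exp t := by
  rw [cosh_eq]
  linarith [exp_le_exp.2 (neg_le_self ht)]

theorem arsinh_mul_sinh_le {c t : ℝ} (hc : 1 ≤ c) (ht : 0 ≤ t) :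
    arsinh (c * sinh t) ≤ c * t := by
  rw [← arsinh_sinh (c * t)]
  exact arsinh_le_arsinh.2 (mul_sinh_le_sinh_mul hc ht)

end Real

namespace UpperHalfPlane

open Real

theorem one_le_norm_div_im (x : ℍ) : 1 ≤ ‖(x : ℂ)‖ / x.im := by
  rw [one_le_div x.im_pos]
  simpa [abs_of_pos x.im_pos] using Complex.abs_im_le_norm (x : ℂ)

theorem dist_exp_smul_self (ℓ : ℝ) (x : ℍ) :
    dist ((⟨exp ℓ, exp_pos ℓ⟩ : {a : ℝ // 0 < a}) • x) x =
      2 * arsinh (|sinh (ℓ / 2)| * (‖(x : ℂ)‖ / x.im)) := by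
  have hx := x.im_pos
  have hexp : exp ℓ = exp (ℓ / 2) ^ 2 := by rw [← exp_nat_mul]; ring_nf
  have hsinh : exp ℓ - 1 = 2 * exp (ℓ / 2) * sinh (ℓ / 2) := by
    rw [sinh_eq, exp_neg, hexp]; field_simp
  simp only [dist_eq, pos_real_im, coe_pos_real_smul, Complex.dist_eq]
  rw [show exp ℓ • (x : ℂ) - x = (exp ℓ - 1) • (x : ℂ) by rw [sub_smul, one_smul], norm_smul,
    Real.norm_eq_abs, hsinh, abs_mul, abs_of_pos (by positivity : 0 < 2 * exp (ℓ / 2)),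
    show exp ℓ * x.im * x.im = (exp (ℓ / 2) * x.im) ^ 2 by rw [hexp]; ring,
    sqrt_sq (by positivity)]
  congr 2
  field_simp

theorem dist_exp_smul_self_le (ℓ : ℝ) (x : ℍ) :
    dist ((⟨exp ℓ, exp_pos ℓ⟩ : {a : ℝ // 0 < a}) • x) x ≤ |ℓ| * (‖(x : ℂ)‖ / x.im) := by
  rw [dist_exp_smul_self, abs_sinh, abs_div, abs_two, mul_comm (sinh _)]
  linarith [arsinh_mul_sinh_le (one_le_norm_div_im x) (by positivity : 0 ≤ |ℓ| / 2)]

theorem norm_div_im_le_cosh_dist {x z : ℍ} (hz : z.re = 0) :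
    ‖(x : ℂ)‖ / x.im ≤ cosh (dist x z) := by
  have hx := x.im_pos
  have hz' := z.im_pos
  have hdist : dist (x : ℂ) z ^ 2 = ‖(x : ℂ)‖ ^ 2 - 2 * x.im * z.im + z.im ^ 2 := by
    rw [Complex.dist_eq, Complex.sq_norm, Complex.sq_norm, Complex.normSq_apply,
      Complex.normSq_apply]
    simp only [Complex.sub_re, coe_re, hz, sub_zero, Complex.sub_im, coe_im]
    ring
  rw [cosh_dist, hdist, div_le_iff₀ hx]
  rw [show (1 + (‖(x : ℂ)‖ ^ 2 - 2 * x.im * z.im + z.im ^ 2) / (2 * x.im * z.im)) * x.im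
    = (‖(x : ℂ)‖ ^ 2 + z.im ^ 2) / (2 * z.im) by field_simp; ring, le_div_iff₀ (by positivity)]
  nlinarith [sq_nonneg (‖(x : ℂ)‖ - z.im)]

theorem norm_div_im_le_exp_infDist (x : ℍ) :
    ‖(x : ℂ)‖ / x.im ≤ exp (infDist x {z : ℍ | z.re = 0}) := by
  obtain ⟨z, hz, hxz⟩ := (isClosed_eq continuous_re continuous_const).exists_infDist_eq_dist
    ⟨I, I_re⟩ x
  rw [hxz]
  exact (norm_div_im_le_cosh_dist hz).trans (cosh_le_exp_of_nonneg dist_nonneg)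

theorem smul_eq_exp_smul_of_coe_eq_diag (ℓ : ℝ) (T : Matrix.SpecialLinearGroup (Fin 2) ℝ)
    (hT : (T : Matrix (Fin 2) (Fin 2) ℝ) = !![exp (ℓ / 2), 0; 0, exp (-(ℓ / 2))]) (x : ℍ) :
    T • x = (⟨exp ℓ, exp_pos ℓ⟩ : {a : ℝ // 0 < a}) • x := by
  ext1
  rw [coe_specialLinearGroup_apply, coe_pos_real_smul]
  simp only [hT, Matrix.of_apply, Matrix.cons_val', Matrix.cons_val_zero, Matrix.cons_val_one,
    Matrix.empty_val', Matrix.cons_val_fin_one, Algebra.algebraMap_self_apply]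
  push_cast
  rw [zero_mul, zero_add, add_zero, div_eq_iff (Complex.exp_ne_zero _), Complex.real_smul,
    Complex.ofReal_exp, mul_right_comm, ← Complex.exp_add]
  ring_nf

end UpperHalfPlane

/-- Norm bound for a transvection along the positive imaginary axis
(equation (7.3) of the paper): if `T = diag (e^{ℓ/2}, e^{−ℓ/2})`, then for all
`x̂, x ∈ ℍ` one has
`dist (T • x) x * exp (−dist x̂ x) ≤ |ℓ| * exp (infDist x̂ I)`, where `I` is the
positive imaginary axis; i.e. `‖T‖_{x̂} ≤ |ℓ| * e^{d(x̂, I)}`. -/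
theorem transvection_norm_bound
    (ℓ : ℝ) (T : Matrix.SpecialLinearGroup (Fin 2) ℝ)
    (hT : (T : Matrix (Fin 2) (Fin 2) ℝ) =
      !![Real.exp (ℓ / 2), 0; 0, Real.exp (-(ℓ / 2))]) :
    ∀ xhat x : UpperHalfPlane,
      dist (T • x) x * Real.exp (-dist xhat x) ≤
        |ℓ| * Real.exp (infDist xhat {z : UpperHalfPlane | z.re = 0}) := by
  intro xhat x
  set I : Set UpperHalfPlane := {z | z.re = 0}
  have hdisp : dist (T • x) x ≤ |ℓ| * Real.exp (infDist x I) := by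
    rw [UpperHalfPlane.smul_eq_exp_smul_of_coe_eq_diag ℓ T hT]
    exact (UpperHalfPlane.dist_exp_smul_self_le ℓ x).trans
      (mul_le_mul_of_nonneg_left (UpperHalfPlane.norm_div_im_le_exp_infDist x) (abs_nonneg ℓ))
  have hshift : Real.exp (infDist x I) * Real.exp (-dist xhat x) ≤ Real.exp (infDist xhat I) := by
    rw [← Real.exp_add, Real.exp_le_exp, dist_comm]
    linarith [infDist_le_infDist_add_dist (x := x) (y := xhat) (s := I)]
  calc dist (T • x) x * Real.exp (-dist xhat x)
      ≤ |ℓ| * Real.exp (infDist x I) * Real.exp (-dist xhat x) := by gcongr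
    _ ≤ |ℓ| * Real.exp (infDist xhat I) := by
      rw [mul_assoc]; exact mul_le_mul_of_nonneg_left hshift (abs_nonneg ℓ)
end

section
/- (Norm bound for a parabolic, instance of equation (7.1) of the paper.) Let c ∈ ℝ and let P ∈ SL(2,ℝ) be the upper-triangular unipotent matrix with top-right entry c, so that P acts on ℍ by z ↦ z + c. Then for every z ∈ ℍ one has dist(P•z, z) ≤ |c|·exp(dist(i, z)), where i denotes the point of ℍ with real part 0 and imaginary part 1. (Equivalently, ‖P‖_{i} := d_i(id, P) is at most |c|, the hyperbolic length of the horocyclic segment based at ∞ joining i and i + c.) -/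
/-!
The parabolic `P` is the horizontal translation `z ↦ z + c`, which preserves `Im z`; its
displacement is therefore at most the Euclidean displacement `|c|` divided by `Im z`. Finally
`1 / Im z ≤ exp (dist i z)`, since `log Im` is `1`-Lipschitz for the hyperbolic metric.
-/

open Metric

namespace UpperHalfPlane

theorem dist_real_vadd_le (c : ℝ) (z : ℍ) : dist (c +ᵥ z) z ≤ |c| / z.im := by
  have hsqrt : √((c +ᵥ z).im * z.im) = z.im := by
    rw [vadd_im, Real.sqrt_mul_self z.im_pos.le]
  have hcoe : dist ((c +ᵥ z : ℍ) : ℂ) z = |c| := by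
    rw [coe_vadd, dist_add_self_left, Complex.norm_real, Real.norm_eq_abs]
  simpa only [hsqrt, hcoe] using dist_le_dist_coe_div_sqrt (c +ᵥ z) z

theorem inv_im_le_exp_dist_I (z : ℍ) : z.im⁻¹ ≤ Real.exp (dist I z) := by
  rw [inv_le_iff_one_le_mul₀' z.im_pos]
  simpa only [I_im] using im_le_im_mul_exp_dist I z

theorem specialLinearGroup_smul_eq_vadd {c : ℝ} {P : Matrix.SpecialLinearGroup (Fin 2) ℝ}
    (hP : (P : Matrix (Fin 2) (Fin 2) ℝ) = !![1, c; 0, 1]) (z : ℍ) : P • z = c +ᵥ z := by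
  rw [UpperHalfPlane.ext_iff, coe_vadd, add_comm, specialLinearGroup_apply]
  simp [hP]

end UpperHalfPlane

/-- Norm bound for a parabolic (instance of equation (7.1) of the paper): if
`P = !![1, c; 0, 1]`, acting on `ℍ` by `z ↦ z + c`, then for every `z ∈ ℍ`,
`dist (P • z) z ≤ |c| * exp (dist i z)`; i.e. `‖P‖_i ≤ |c|`, the hyperbolic
length of the horocyclic segment based at `∞` joining `i` and `i + c`. -/
theorem parabolic_norm_bound
    (c : ℝ) (P : Matrix.SpecialLinearGroup (Fin 2) ℝ)
    (hP : (P : Matrix (Fin 2) (Fin 2) ℝ) = !![1, c; 0, 1]) :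
    ∀ z : UpperHalfPlane,
      dist (P • z) z ≤ |c| * Real.exp (dist UpperHalfPlane.I z) := by
  intro z
  calc dist (P • z) z = dist (c +ᵥ z) z := by
        rw [UpperHalfPlane.specialLinearGroup_smul_eq_vadd hP]
    _ ≤ |c| * z.im⁻¹ := UpperHalfPlane.dist_real_vadd_le c z
    _ ≤ |c| * Real.exp (dist UpperHalfPlane.I z) :=
        mul_le_mul_of_nonneg_left (UpperHalfPlane.inv_im_le_exp_dist_I z) (abs_nonneg c)
end
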